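/- For Poisson random variables P(θ₁) and P(θ₂) with parameters θ₁, θ₂ > 0, the total variation distance between their laws satisfies d_TV(P(θ₁), P(θ₂)) ≤ |θ₁ − θ₂|. -/

import Mathlib

/-!
Write `Po(θ₂) = Po(θ₁) ∗ Po(θ₂ - θ₁)` for `θ₁ ≤ θ₂`. Keeping only the atom of `Po(θ₂ - θ₁)` at `0`
in the convolution shows `Po(θ₂) ≥ e^{-(θ₂ - θ₁)} • Po(θ₁)`. A probability measure that dominates
`c` times another one is within `1 - c` of it on every event, and `1 - e^{-x} ≤ x`.
-/

open MeasureTheory ProbabilityTheory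
open scoped ENNReal NNReal

namespace MeasureTheory.Measure

variable {M : Type*} [MeasurableSpace M]

lemma measure_singleton_smul_dirac_le (μ : Measure M) (x : M) : μ {x} • dirac x ≤ μ := by
  refine le_iff.2 fun s hs => ?_
  by_cases hx : x ∈ s
  · simpa [dirac_apply' _ hs, hx] using measure_mono (Set.singleton_subset_iff.2 hx)
  · simp [dirac_apply' _ hs, hx]

lemma measure_singleton_zero_smul_le_conv [AddMonoid M] [MeasurableAdd₂ M]
    (μ ν : Measure M) [SFinite μ] [SFinite ν] : ν {0} • μ ≤ μ ∗ ν :=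
  calc ν {0} • μ = μ ∗ (ν {0} • dirac 0) := by rw [conv_smul_right, conv_dirac_zero]
    _ ≤ μ ∗ ν := map_mono (prod_mono le_rfl (measure_singleton_smul_dirac_le ν 0)) (by fun_prop)

end MeasureTheory.Measure

lemma abs_measureReal_sub_le_of_smul_le {Ω : Type*} [MeasurableSpace Ω] {μ ν : Measure Ω}
    [IsProbabilityMeasure μ] [IsProbabilityMeasure ν] {c : ℝ} (h : ENNReal.ofReal c • μ ≤ ν)
    {s : Set Ω} (hs : MeasurableSet s) : |ν.real s - μ.real s| ≤ 1 - c := by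
  have hdom : ∀ t, c * μ.real t ≤ ν.real t := by
    intro t
    rcases lt_or_ge c 0 with hc | hc
    · nlinarith [measureReal_nonneg (μ := μ) (s := t), measureReal_nonneg (μ := ν) (s := t)]
    · have := ENNReal.toReal_mono (measure_ne_top ν t) (h t)
      rwa [Measure.smul_apply, smul_eq_mul, ENNReal.toReal_mul, ENNReal.toReal_ofReal hc] at this
  have hc : c ≤ 1 := by simpa using hdom Set.univ
  have hs_compl := hdom sᶜ
  rw [probReal_compl_eq_one_sub hs, probReal_compl_eq_one_sub hs] at hs_compl
  have hμ₀ : 0 ≤ μ.real s := measureReal_nonneg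
  have hμ₁ : μ.real s ≤ 1 := measureReal_le_one
  rw [abs_le]
  constructor <;> nlinarith [hdom s]

namespace ProbabilityTheory

lemma exp_neg_sub_smul_poissonMeasure_le {r₁ r₂ : ℝ≥0} (h : r₁ ≤ r₂) :
    ENNReal.ofReal (Real.exp (-(r₂ - r₁))) • Po(r₁) ≤ Po(r₂) := by
  have hconv : Po(r₂) = Po(r₁) ∗ Po(r₂ - r₁) := by
    rw [poissonMeasure_conv_poissonMeasure, add_tsub_cancel_of_le h]
  have hatom : Po(r₂ - r₁) {0} = ENNReal.ofReal (Real.exp (-(r₂ - r₁))) := by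
    simp [poissonMeasure_singleton, NNReal.coe_sub h]
  rw [hconv, ← hatom]
  exact Measure.measure_singleton_zero_smul_le_conv _ _

lemma abs_poissonMeasure_real_sub_le_of_le {r₁ r₂ : ℝ≥0} (h : r₁ ≤ r₂) (s : Set ℕ) :
    |Po(r₂).real s - Po(r₁).real s| ≤ r₂ - r₁ :=
  calc |Po(r₂).real s - Po(r₁).real s| ≤ 1 - Real.exp (-(r₂ - r₁)) :=
        abs_measureReal_sub_le_of_smul_le (exp_neg_sub_smul_poissonMeasure_le h) .of_discrete
    _ ≤ r₂ - r₁ := by linarith [Real.one_sub_le_exp_neg ((r₂ : ℝ) - r₁)]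

end ProbabilityTheory

theorem poisson_tv_dist_le_general
    (θ₁ θ₂ : NNReal) (A : Set ℕ) :
    |(poissonMeasure θ₁ A).toReal - (poissonMeasure θ₂ A).toReal| ≤
      |(θ₁ : ℝ) - (θ₂ : ℝ)| := by
  rcases le_total θ₁ θ₂ with h | h
  · rw [abs_sub_comm, abs_sub_comm (θ₁ : ℝ)]
    exact (abs_poissonMeasure_real_sub_le_of_le h A).trans (le_abs_self _)
  · exact (abs_poissonMeasure_real_sub_le_of_le h A).trans (le_abs_self _)

/-- The total variation distance between two Poisson laws with parameters `θ₁, θ₂ > 0`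
is at most `|θ₁ - θ₂|`. -/
theorem poisson_tv_dist_le
    (θ₁ θ₂ : NNReal) (h₁ : 0 < θ₁) (h₂ : 0 < θ₂) (A : Set ℕ) :
    |(poissonMeasure θ₁ A).toReal - (poissonMeasure θ₂ A).toReal| ≤
      |(θ₁ : ℝ) - (θ₂ : ℝ)| :=
  poisson_tv_dist_le_general θ₁ θ₂ A
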